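/- Let A = (a_{ij}) be a doubly stochastic N×N real matrix (a_{ij} ≥ 0, each row and each column sums to 1), and let q = (q_1,...,q_N) be a probability vector. Define p_i = ∑_j a_{ij} q_j. Then the Shannon entropy satisfies H(p) ≥ H(q), i.e., -∑_i p_i log p_i ≥ -∑_j q_j log q_j. -/

import Mathlib

open Finset Matrix

/-- Jensen's inequality along each row, summed over the rows; the column sums being `1`
recombine the left-hand side into `∑ j, f (q j)`. -/
theorem ConcaveOn.sum_le_sum_mulVec_of_mem_doublyStochastic {ι : Type*} [Fintype ι]
    [DecidableEq ι] {s : Set ℝ} {f : ℝ → ℝ} (hf : ConcaveOn ℝ s f) {A : Matrix ι ι ℝ}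
    (hA : A ∈ doublyStochastic ℝ ι) {q : ι → ℝ} (hq : ∀ j, q j ∈ s) :
    ∑ j, f (q j) ≤ ∑ i, f ((A *ᵥ q) i) := by
  have row_jensen (i : ι) : ∑ j, A i j * f (q j) ≤ f ((A *ᵥ q) i) := by
    simpa only [mulVec, dotProduct, smul_eq_mul] using
      hf.le_map_sum (fun j _ => nonneg_of_mem_doublyStochastic hA)
        (sum_row_of_mem_doublyStochastic hA i) (fun j _ => hq j)
  calc ∑ j, f (q j)
      = ∑ j, (∑ i, A i j) * f (q j) := by simp only [sum_col_of_mem_doublyStochastic hA, one_mul]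
    _ = ∑ i, ∑ j, A i j * f (q j) := by simp only [sum_mul]; exact sum_comm
    _ ≤ ∑ i, f ((A *ᵥ q) i) := sum_le_sum fun i _ => row_jensen i

theorem shannon_entropy_le_of_doublyStochastic_general (N : ℕ)
    (a : Fin N → Fin N → ℝ) (q : Fin N → ℝ)
    (ha : ∀ i j, 0 ≤ a i j)
    (hrow : ∀ i, ∑ j, a i j = 1) (hcol : ∀ j, ∑ i, a i j = 1)
    (hq0 : ∀ j, 0 ≤ q j)
    (p : Fin N → ℝ) (hp : ∀ i, p i = ∑ j, a i j * q j) :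
    ∑ j, Real.negMulLog (q j) ≤ ∑ i, Real.negMulLog (p i) := by
  have ha_mem : Matrix.of a ∈ doublyStochastic ℝ (Fin N) :=
    mem_doublyStochastic_iff_sum.mpr ⟨ha, hrow, hcol⟩
  have hp_eq : p = Matrix.of a *ᵥ q := funext hp
  rw [hp_eq]
  exact Real.concaveOn_negMulLog.sum_le_sum_mulVec_of_mem_doublyStochastic ha_mem hq0

/-- Applying a doubly stochastic matrix to a probability vector does not
decrease the Shannon entropy. -/
theorem shannon_entropy_le_of_doublyStochastic (N : ℕ)
    (a : Fin N → Fin N → ℝ) (q : Fin N → ℝ)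
    (ha : ∀ i j, 0 ≤ a i j)
    (hrow : ∀ i, ∑ j, a i j = 1) (hcol : ∀ j, ∑ i, a i j = 1)
    (hq0 : ∀ j, 0 ≤ q j) (hq1 : ∑ j, q j = 1)
    (p : Fin N → ℝ) (hp : ∀ i, p i = ∑ j, a i j * q j) :
    ∑ j, Real.negMulLog (q j) ≤ ∑ i, Real.negMulLog (p i) :=
  shannon_entropy_le_of_doublyStochastic_general N a q ha hrow hcol hq0 p hp
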